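/- The d-plane Radon transform on the torus is injective on continuous functions: if f : 𝕋^n → ℂ is continuous, 1 ≤ d < n, and ∫_{[0,1]^d} f(x + t_1 v_1 + ... + t_d v_d) dt = 0 for every x ∈ 𝕋^n and every linearly independent tuple v_1, ..., v_d ∈ ℤ^n \ {0}, then f = 0. -/

import Mathlib

/-!
Fix `k ∈ ℤⁿ`. Since `d < n` there are `d` linearly independent integer vectors `vᵢ` orthogonal to
`k`, so the character `e_{-k}(y) = exp(-2πi k·y)` is constant along the plane they span. The Haar
integral of `e_{-k} f` on the torus is unchanged by translating along that plane, so averaging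
over `t ∈ [0,1]^d` and exchanging the integrals gives
`f̂(k) = ∫ e_{-k}(y) (∫ f(y + Σ tᵢvᵢ) dt) dy = 0`.
A continuous function on the torus all of whose Fourier coefficients vanish is zero.
-/

open MeasureTheory Real

theorem linearIndependent_of_apply_ne_zero_of_apply_eq_zero {ι κ R : Type*} [Fintype ι]
    [Ring R] [NoZeroDivisors R] {w : ι → κ → R} (σ : ι → κ)
    (hdiag : ∀ i, w i (σ i) ≠ 0) (hoff : ∀ i j, i ≠ j → w i (σ j) = 0) :
    LinearIndependent R w := by
  rw [Fintype.linearIndependent_iff]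
  intro g hg j
  have hj := congrFun hg (σ j)
  rw [Finset.sum_apply, Finset.sum_eq_single j (fun i _ hij => by simp [hoff i j hij])
    (by simp)] at hj
  simpa [hdiag j] using hj

theorem exists_linearIndependent_orthogonal {n d : ℕ} (hdn : d < n) (k : Fin n → ℤ) :
    ∃ W : Fin d → Fin n → ℤ,
      LinearIndependent ℝ (fun i j => (W i j : ℝ)) ∧ ∀ i, ∑ j, k j * W i j = 0 := by
  obtain ⟨j₀, c, hc, hkc⟩ : ∃ j₀ c, c ≠ 0 ∧ ∀ j, k j * c = k j * k j₀ := by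
    by_cases hk : k = 0
    · exact ⟨⟨0, by omega⟩, 1, one_ne_zero, by simp [hk]⟩
    · obtain ⟨j₀, hj₀⟩ := Function.ne_iff.mp hk
      exact ⟨j₀, k j₀, hj₀, fun _ => rfl⟩
  obtain ⟨σ⟩ : Nonempty (Fin d ↪ {j // j ≠ j₀}) :=
    Function.Embedding.nonempty_of_card_le (by simp; omega)
  have hσ : ∀ i, (σ i : Fin n) ≠ j₀ := fun i => (σ i).2
  refine ⟨fun i j => (if j = σ i then c else 0) - (if j = j₀ then k (σ i) else 0), ?_, ?_⟩
  · refine linearIndependent_of_apply_ne_zero_of_apply_eq_zero (fun i => (σ i : Fin n))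
      (fun i => by simpa [hσ i] using hc) fun i j hij => ?_
    have : (σ j : Fin n) ≠ σ i := fun h => hij (σ.injective (Subtype.ext h)).symm
    simp [this, hσ j]
  · intro i
    simp [mul_sub, Finset.sum_sub_distrib, hkc, mul_comm]

namespace UnitAddTorus

variable {ι : Type*}

def mk : C(ι → ℝ, UnitAddTorus ι) := ⟨fun x i => x i, by fun_prop⟩

@[simp] theorem mk_apply (x : ι → ℝ) (i : ι) : mk x i = x i := rfl

theorem mk_add (x y : ι → ℝ) : mk (x + y) = mk x + mk y := rfl

theorem mk_surjective : Function.Surjective (mk : (ι → ℝ) → UnitAddTorus ι) :=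
  Function.Surjective.piMap fun _ => QuotientAddGroup.mk_surjective

theorem isQuotientMap_mk [Finite ι] : Topology.IsQuotientMap (mk : (ι → ℝ) → UnitAddTorus ι) :=
  (IsOpenMap.piMap (fun _ => QuotientAddGroup.isOpenMap_coe)
    (Filter.Eventually.of_forall fun _ => QuotientAddGroup.mk_surjective)).isQuotientMap
    mk.continuous mk_surjective

theorem mk_eq_mk_iff {x y : ι → ℝ} : mk x = mk y ↔ ∃ m : ι → ℤ, y = x + fun i => (m i : ℝ) := by
  have key : ∀ i, (x i : UnitAddCircle) = y i ↔ ∃ m : ℤ, y i = x i + m := fun i => by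
    rw [eq_comm, ← sub_eq_zero, ← AddCircle.coe_sub, AddCircle.coe_eq_zero_iff]
    simp [eq_comm, sub_eq_iff_eq_add']
  simp only [funext_iff, mk_apply, key, Classical.skolem, Pi.add_apply]

theorem exists_continuousMap_comp_mk_eq [Finite ι] {X : Type*} [TopologicalSpace X]
    {f : (ι → ℝ) → X} (hf : Continuous f)
    (hper : ∀ (x : ι → ℝ) (m : ι → ℤ), f (x + fun i => (m i : ℝ)) = f x) :
    ∃ F : C(UnitAddTorus ι, X), ∀ x, F (mk x) = f x := by
  have hfac : Function.FactorsThrough f mk := fun x y hxy => by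
    obtain ⟨m, rfl⟩ := mk_eq_mk_iff.mp hxy
    exact (hper x m).symm
  exact ⟨isQuotientMap_mk.lift ⟨f, hf⟩ hfac, fun x =>
    congrFun (congrArg DFunLike.coe (isQuotientMap_mk.lift_comp ⟨f, hf⟩ hfac)) x⟩

variable [Fintype ι]

theorem mFourier_add_apply (m : ι → ℤ) (x y : UnitAddTorus ι) :
    mFourier m (x + y) = mFourier m x * mFourier m y := by
  simp only [mFourier, ContinuousMap.coe_mk, ← Finset.prod_mul_distrib]
  exact Finset.prod_congr rfl fun i _ => by simp [fourier_apply, smul_add, AddCircle.toCircle_add]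

theorem mFourier_mk_eq_one {m : ι → ℤ} {x : ι → ℝ} (h : ∑ i, (m i : ℝ) * x i = 0) :
    mFourier m (mk x) = 1 := by
  simp only [mFourier, ContinuousMap.coe_mk, mk_apply, fourier_coe_apply, ← Complex.exp_sum]
  rw [← Complex.exp_zero]
  congr 1
  have := congrArg (fun r : ℝ => 2 * π * Complex.I * r) h
  push_cast at this
  simpa [Finset.mul_sum, mul_assoc] using this

theorem eq_zero_of_mFourierCoeff_eq_zero (F : C(UnitAddTorus ι, ℂ))
    (h : ∀ k, mFourierCoeff F k = 0) : F = 0 := by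
  let μ : Measure (UnitAddTorus ι) := Measure.pi fun _ => AddCircle.haarAddCircle
  have hrepr : mFourierBasis.repr (F.toLp 2 μ ℂ) = 0 := by
    ext i
    rw [mFourierBasis_repr]
    exact (mFourierCoeff_toLp F i).trans (h i)
  apply ContinuousMap.toLp_injective μ (p := 2) (𝕜 := ℂ)
  rw [map_zero]
  exact mFourierBasis.repr.injective (by rw [hrepr, map_zero])

end UnitAddTorus

theorem integral_mul_eq_zero_of_integral_comp_add_eq_zero {G P : Type*} [AddGroup G]
    [TopologicalSpace G] [CompactSpace G] [MeasurableSpace G] [OpensMeasurableSpace G]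
    [MeasurableAdd₂ G] [MeasurableSpace P] {μ : Measure G} [IsFiniteMeasure μ]
    [μ.IsAddRightInvariant] {ν : Measure P} [IsProbabilityMeasure ν] {c : P → G}
    (hc : Measurable c) (χ F : C(G, ℂ)) (hχ : ∀ y p, χ (y + c p) = χ y)
    (hF : ∀ y, ∫ p, F (y + c p) ∂ν = 0) : ∫ y, χ y * F y ∂μ = 0 := by
  have hint : Integrable (Function.uncurry fun y p => χ y * F (y + c p)) (μ.prod ν) := by
    refine Integrable.of_bound ?_ (‖χ‖ * ‖F‖) (Filter.Eventually.of_forall fun ⟨y, p⟩ => ?_)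
    · exact (χ.continuous.measurable.comp measurable_fst).mul
        (F.continuous.measurable.comp (measurable_fst.add (hc.comp measurable_snd)))
        |>.aestronglyMeasurable
    · simp only [Function.uncurry_apply_pair, norm_mul]
      exact mul_le_mul (χ.norm_coe_le_norm _) (F.norm_coe_le_norm _) (norm_nonneg _) (norm_nonneg _)
  calc ∫ y, χ y * F y ∂μ = ∫ p, ∫ y, χ (y + c p) * F (y + c p) ∂μ ∂ν := by
        have hshift : ∀ p, ∫ y, χ (y + c p) * F (y + c p) ∂μ = ∫ y, χ y * F y ∂μ :=
          fun p => integral_add_right_eq_self (fun y => χ y * F y) (c p)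
        simp only [hshift, integral_const, probReal_univ, one_smul]
    _ = ∫ p, ∫ y, χ y * F (y + c p) ∂μ ∂ν := by simp_rw [hχ]
    _ = ∫ y, ∫ p, χ y * F (y + c p) ∂ν ∂μ := (integral_integral_swap hint).symm
    _ = 0 := by simp [integral_const_mul, hF]

theorem dplane_injective_general (n d : ℕ) (hdn : d < n)
    (f : (Fin n → ℝ) → ℂ)
    (hf : Continuous f)
    (hper : ∀ (x : Fin n → ℝ) (m : Fin n → ℤ), f (x + fun i => (m i : ℝ)) = f x)
    (h : ∀ (x : Fin n → ℝ) (v : Fin d → (Fin n → ℤ)), (∀ i, v i ≠ 0) →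
      LinearIndependent ℝ (fun i : Fin d => (fun j : Fin n => (v i j : ℝ))) →
      (∫ t in Set.Icc (0 : Fin d → ℝ) 1, f (x + fun j => ∑ i, t i * (v i j : ℝ))) = 0) :
    f = 0 := by
  obtain ⟨F, hFf⟩ := UnitAddTorus.exists_continuousMap_comp_mk_eq hf hper
  suffices F = 0 by funext x; rw [← hFf x, this]; rfl
  refine UnitAddTorus.eq_zero_of_mFourierCoeff_eq_zero F fun k => ?_
  obtain ⟨W, hW, hWk⟩ := exists_linearIndependent_orthogonal hdn (-k)
  let V : (Fin d → ℝ) → Fin n → ℝ := fun t j => ∑ i, t i * (W i j : ℝ)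
  have hV : ∀ t, ∑ j, ((-k) j : ℝ) * V t j = 0 := fun t =>
    calc ∑ j, ((-k) j : ℝ) * V t j = ∑ i, t i * ((∑ j, (-k) j * W i j : ℤ) : ℝ) := by
          push_cast; simp only [V, Finset.mul_sum]; rw [Finset.sum_comm]; congr! 2; ring
      _ = 0 := by simp only [hWk, Int.cast_zero, mul_zero, Finset.sum_const_zero]
  have : IsProbabilityMeasure (volume.restrict (Set.Icc (0 : Fin d → ℝ) 1)) :=
    ⟨by simp [Real.volume_Icc_pi]⟩
  -- `mFourierCoeff` integrates against this product of normalised Haar measures, not `volume`.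
  refine integral_mul_eq_zero_of_integral_comp_add_eq_zero
    (μ := Measure.pi fun _ => AddCircle.haarAddCircle)
    (ν := volume.restrict (Set.Icc (0 : Fin d → ℝ) 1))
    (c := fun t => UnitAddTorus.mk (V t)) (by fun_prop) _ _ (fun y t => ?_) fun y => ?_
  · rw [UnitAddTorus.mFourier_add_apply, UnitAddTorus.mFourier_mk_eq_one (hV t), mul_one]
  · obtain ⟨x, rfl⟩ := UnitAddTorus.mk_surjective y
    simp_rw [← UnitAddTorus.mk_add, hFf]
    refine h x W (fun i hi => hW.ne_zero i ?_) hW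
    ext j
    simp [hi]

/-- Injectivity of the d-plane Radon transform on continuous functions on `𝕋ⁿ`,
`n ≥ 2`, `1 ≤ d < n`. -/
theorem dplane_injective (n d : ℕ) (hn : 2 ≤ n) (hd1 : 1 ≤ d) (hdn : d < n)
    (f : (Fin n → ℝ) → ℂ)
    (hf : Continuous f)
    (hper : ∀ (x : Fin n → ℝ) (m : Fin n → ℤ), f (x + fun i => (m i : ℝ)) = f x)
    (h : ∀ (x : Fin n → ℝ) (v : Fin d → (Fin n → ℤ)), (∀ i, v i ≠ 0) →
      LinearIndependent ℝ (fun i : Fin d => (fun j : Fin n => (v i j : ℝ))) →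
      (∫ t in Set.Icc (0 : Fin d → ℝ) 1, f (x + fun j => ∑ i, t i * (v i j : ℝ))) = 0) :
    f = 0 :=
  dplane_injective_general n d hdn f hf hper h
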